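/- For every α ∈ [1,∞] and every z ∈ ℝ, the second derivative of the margin α-loss is bounded in absolute value by 1/4: |(l̃^α)''(z)| = |σ(z)^{2-1/α}·(1-σ(z)) - (1 - 1/α)·σ(z)^{1-1/α}·(1-σ(z))²| ≤ 1/4 (with the convention 1/α = 0 for α = ∞). -/

import Mathlib

/-!
For every `α ∈ [1, ∞]` the first derivative of the margin `α`-loss has the single closed form
`-σ^t (1 - σ)` with `t = 1 - 1/α ∈ [0, 1]`, so its second derivative is a difference `A - B` of the
nonnegative terms `A = σ^(t+1) (1 - σ)` and `B = t σ^t (1 - σ)²`. Each is at most `1/4`: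
`A ≤ σ (1 - σ)`, and Bernoulli's inequality `σ^t ≤ 1 - t (1 - σ)` gives `B ≤ x (1 - x)` with
`x = t (1 - σ)`. Hence `|A - B| ≤ 1/4`.
-/

/-- The sigmoid function `σ(z) = 1/(1+e^{-z})`. -/
noncomputable def sigmoid (z : ℝ) : ℝ := 1 / (1 + Real.exp (-z))

/-- The margin `α`-loss for `α ∈ [1,∞]` (modeled as `α : EReal`). -/
noncomputable def margAlphaLoss (α : EReal) (z : ℝ) : ℝ :=
  if α = 1 then -Real.log (sigmoid z)
  else if α = ⊤ then 1 - sigmoid z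
  else (α.toReal / (α.toReal - 1)) * (1 - sigmoid z ^ (1 - 1/α.toReal))

/-- `1/α`, with the convention `1/∞ = 0`. -/
noncomputable def invAlpha (α : EReal) : ℝ := if α = ⊤ then 0 else 1/α.toReal

lemma sigmoid_eq_real_sigmoid : sigmoid = Real.sigmoid := by
  ext z
  rw [sigmoid, Real.sigmoid_def, one_div]

lemma sigmoid_pos (z : ℝ) : 0 < sigmoid z := sigmoid_eq_real_sigmoid ▸ Real.sigmoid_pos z

lemma sigmoid_lt_one (z : ℝ) : sigmoid z < 1 := sigmoid_eq_real_sigmoid ▸ Real.sigmoid_lt_one z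

lemma hasDerivAt_sigmoid (z : ℝ) : HasDerivAt sigmoid (sigmoid z * (1 - sigmoid z)) z :=
  sigmoid_eq_real_sigmoid ▸ Real.hasDerivAt_sigmoid z

lemma hasDerivAt_sigmoid_rpow (t z : ℝ) :
    HasDerivAt (fun x => sigmoid x ^ t) (t * sigmoid z ^ t * (1 - sigmoid z)) z := by
  have hσ := (sigmoid_pos z).ne'
  convert (hasDerivAt_sigmoid z).rpow_const (p := t) (Or.inl hσ) using 1
  rw [Real.rpow_sub_one hσ]
  field_simp

lemma hasDerivAt_sigmoid_rpow_mul_one_sub (t z : ℝ) :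
    HasDerivAt (fun x => sigmoid x ^ t * (1 - sigmoid x))
      (t * sigmoid z ^ t * (1 - sigmoid z) ^ 2 - sigmoid z ^ (t + 1) * (1 - sigmoid z)) z := by
  refine ((hasDerivAt_sigmoid_rpow t z).mul ((hasDerivAt_sigmoid z).const_sub 1)).congr_deriv ?_
  rw [Real.rpow_add_one (sigmoid_pos z).ne']
  ring

lemma margAlphaLoss_one : margAlphaLoss 1 = fun z => -Real.log (sigmoid z) := by
  ext z
  simp [margAlphaLoss]

lemma margAlphaLoss_top : margAlphaLoss ⊤ = fun z => 1 - sigmoid z := by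
  have : (⊤ : EReal) ≠ 1 := (EReal.coe_ne_top 1).symm
  ext z
  simp [margAlphaLoss, this]

lemma margAlphaLoss_coe {a : ℝ} (ha : a ≠ 1) :
    margAlphaLoss a = fun z => a / (a - 1) * (1 - sigmoid z ^ (1 - 1 / a)) := by
  ext z
  simp [margAlphaLoss, ha]

lemma invAlpha_top : invAlpha ⊤ = 0 := if_pos rfl

lemma invAlpha_coe (a : ℝ) : invAlpha a = 1 / a := by
  simp [invAlpha]

lemma invAlpha_mem_Icc {α : EReal} (hα : 1 ≤ α) : invAlpha α ∈ Set.Icc 0 1 := by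
  induction α with
  | bot => exact absurd (le_bot_iff.1 hα) (EReal.coe_ne_bot 1)
  | top => simp [invAlpha_top]
  | coe a =>
    have ha : 1 ≤ a := mod_cast hα
    rw [invAlpha_coe]
    exact ⟨by positivity, (div_le_one (by linarith)).2 ha⟩

lemma hasDerivAt_margAlphaLoss {α : EReal} (hα : 1 ≤ α) (z : ℝ) :
    HasDerivAt (margAlphaLoss α) (-(sigmoid z ^ (1 - invAlpha α) * (1 - sigmoid z))) z := by
  induction α with
  | bot => exact absurd (le_bot_iff.1 hα) (EReal.coe_ne_bot 1)
  | top =>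
    rw [margAlphaLoss_top, invAlpha_top, sub_zero, Real.rpow_one]
    exact (hasDerivAt_sigmoid z).const_sub 1
  | coe a =>
    have ha : 1 ≤ a := mod_cast hα
    rw [invAlpha_coe]
    obtain rfl | ha₁ := eq_or_ne a 1
    · rw [EReal.coe_one, margAlphaLoss_one, div_one, sub_self, Real.rpow_zero, one_mul]
      refine ((hasDerivAt_sigmoid z).log (sigmoid_pos z).ne').neg.congr_deriv ?_
      field_simp [(sigmoid_pos z).ne']
    · rw [margAlphaLoss_coe ha₁]
      have : a - 1 ≠ 0 := sub_ne_zero.2 ha₁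
      have : a ≠ 0 := (zero_lt_one.trans_le ha).ne'
      refine (((hasDerivAt_sigmoid_rpow (1 - 1 / a) z).const_sub 1).const_mul
        (a / (a - 1))).congr_deriv ?_
      field_simp

lemma iteratedDeriv_two_margAlphaLoss {α : EReal} (hα : 1 ≤ α) (z : ℝ) :
    iteratedDeriv 2 (margAlphaLoss α) z
      = sigmoid z ^ (2 - invAlpha α) * (1 - sigmoid z)
          - (1 - invAlpha α) * sigmoid z ^ (1 - invAlpha α) * (1 - sigmoid z) ^ 2 := by
  have hderiv :
      deriv (margAlphaLoss α) = fun x => -(sigmoid x ^ (1 - invAlpha α) * (1 - sigmoid x)) :=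
    funext fun x => (hasDerivAt_margAlphaLoss hα x).deriv
  rw [iteratedDeriv_succ, iteratedDeriv_one, hderiv]
  refine (hasDerivAt_sigmoid_rpow_mul_one_sub (1 - invAlpha α) z).neg.deriv.trans ?_
  ring_nf

lemma rpow_mul_one_sub_le_quarter {s t : ℝ} (hs₀ : 0 ≤ s) (hs₁ : s ≤ 1) (ht : 1 ≤ t) :
    s ^ t * (1 - s) ≤ 1 / 4 := by
  have hpow : s ^ t ≤ s := by
    simpa using Real.rpow_le_rpow_of_exponent_ge' hs₀ hs₁ zero_le_one ht
  nlinarith [sq_nonneg (s - 1 / 2)]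

lemma mul_rpow_mul_one_sub_sq_le_quarter {s t : ℝ} (hs₀ : 0 ≤ s) (hs₁ : s ≤ 1)
    (ht₀ : 0 ≤ t) (ht₁ : t ≤ 1) : t * s ^ t * (1 - s) ^ 2 ≤ 1 / 4 := by
  have bernoulli : s ^ t ≤ 1 - t * (1 - s) := by
    have := rpow_one_add_le_one_add_mul_self (s := s - 1) (by linarith) ht₀ ht₁
    rw [add_sub_cancel] at this
    linarith
  set x := t * (1 - s)
  have hx₀ : 0 ≤ x := by positivity
  have hx₁ : x ≤ 1 := by nlinarith
  calc t * s ^ t * (1 - s) ^ 2 ≤ t * (1 - t * (1 - s)) * (1 - s) ^ 2 := by gcongr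
    _ = x * (1 - x) * (1 - s) := by ring
    _ ≤ x * (1 - x) := mul_le_of_le_one_right (by nlinarith) (by linarith)
    _ ≤ 1 / 4 := by nlinarith [sq_nonneg (x - 1 / 2)]

/-- For every `α ∈ [1,∞]` and every `z ∈ ℝ`, the second derivative of the margin
`α`-loss equals `σ(z)^{2-1/α}(1-σ(z)) - (1-1/α)σ(z)^{1-1/α}(1-σ(z))²` in absolute
value, and is bounded in absolute value by `1/4` (convention `1/∞ = 0`). -/
theorem margAlphaLoss_second_deriv_bound (α : EReal) (hα : 1 ≤ α) (z : ℝ) :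
    |iteratedDeriv 2 (margAlphaLoss α) z|
      = |sigmoid z ^ (2 - invAlpha α) * (1 - sigmoid z)
          - (1 - invAlpha α) * sigmoid z ^ (1 - invAlpha α) * (1 - sigmoid z) ^ 2| ∧
    |sigmoid z ^ (2 - invAlpha α) * (1 - sigmoid z)
        - (1 - invAlpha α) * sigmoid z ^ (1 - invAlpha α) * (1 - sigmoid z) ^ 2|
      ≤ 1/4 := by
  refine ⟨by rw [iteratedDeriv_two_margAlphaLoss hα], ?_⟩
  obtain ⟨hβ₀, hβ₁⟩ := invAlpha_mem_Icc hα
  have hσ₀ := (sigmoid_pos z).le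
  have hσ₁ := (sigmoid_lt_one z).le
  have h1σ : 0 ≤ 1 - sigmoid z := by linarith
  exact abs_sub_le_of_nonneg_of_le (by positivity)
    (rpow_mul_one_sub_le_quarter hσ₀ hσ₁ (by linarith))
    (mul_nonneg (mul_nonneg (by linarith) (by positivity)) (by positivity))
    (mul_rpow_mul_one_sub_sq_le_quarter hσ₀ hσ₁ (by linarith) (by linarith))
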